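/- arXiv:2605.11834 — 2 statements merged into one kernel-verified Lean document; each statement's English description precedes it below -/
import Mathlib

section
/- Let σ be a finite positive measure on ℝ² with total mass Φ > 0, α ∈ (1, 2], M > 0, such that σ(B(x,r)) ≤ M·r^α for all x and all r > 0. Then ∬_{ℝ²×ℝ²} |x−y|^{-1} dσ(x) dσ(y) ≤ C(α)·M^(1/α)·Φ^(2−1/α), with C(α) depending only on α. -/
/-!
By the layer-cake formula, `∫ |x - y|⁻¹ dσ(y) = ∫₀^∞ σ {y | |x - y| < t⁻¹} dt`. Bound the
integrand by the total mass `Φ` for `t ≤ T` and by the Ahlfors bound `M t^(-α)` for `t > T`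
(integrable since `α > 1`); the cut `T = (M / Φ)^(1/α)` balances the two contributions, giving
`α / (α - 1) · M^(1/α) Φ^(1 - 1/α)` uniformly in `x`. Integrating in `x` multiplies by `Φ`.
-/

open MeasureTheory Metric

section AhlforsRegular

variable {E : Type*} [PseudoMetricSpace E]

lemma setOf_lt_inv_dist_subset_ball (x : E) {t : ℝ} (ht : 0 < t) :
    {y | t < (dist x y)⁻¹} ⊆ ball x t⁻¹ := by
  intro y hy
  have hxy : 0 < dist x y := inv_pos.1 (ht.trans hy)
  rw [mem_ball']
  exact (lt_inv_comm₀ ht hxy).1 hy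

variable [MeasurableSpace E] {σ : Measure E} {M α : ℝ}

lemma setLIntegral_Ioi_measure_lt_inv_dist_le (hα : 1 < α) (hM : 0 ≤ M)
    (hball : ∀ (x : E) (r : ℝ), 0 < r → σ (ball x r) ≤ ENNReal.ofReal (M * r ^ α))
    (x : E) {T : ℝ} (hT : 0 < T) :
    ∫⁻ t in Set.Ioi T, σ {y | t < (dist x y)⁻¹} ≤
      ENNReal.ofReal (M * (T ^ (1 - α) / (α - 1))) := by
  have hint : IntegrableOn (fun t : ℝ => M * t ^ (-α)) (Set.Ioi T) :=
    (integrableOn_Ioi_rpow_of_lt (by linarith) hT).const_mul M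
  have hnonneg : 0 ≤ᵐ[volume.restrict (Set.Ioi T)] fun t : ℝ => M * t ^ (-α) := by
    filter_upwards [ae_restrict_mem measurableSet_Ioi] with t ht
    exact mul_nonneg hM (Real.rpow_nonneg (hT.trans ht).le _)
  calc ∫⁻ t in Set.Ioi T, σ {y | t < (dist x y)⁻¹}
      ≤ ∫⁻ t in Set.Ioi T, ENNReal.ofReal (M * t ^ (-α)) := by
        refine setLIntegral_mono (by fun_prop) fun t ht => ?_
        have ht0 : 0 < t := hT.trans ht
        calc σ {y | t < (dist x y)⁻¹} ≤ σ (ball x t⁻¹) :=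
              measure_mono (setOf_lt_inv_dist_subset_ball x ht0)
          _ ≤ ENNReal.ofReal (M * t⁻¹ ^ α) := hball x t⁻¹ (inv_pos.2 ht0)
          _ = ENNReal.ofReal (M * t ^ (-α)) := by
              rw [Real.inv_rpow ht0.le, ← Real.rpow_neg ht0.le]
    _ = ENNReal.ofReal (∫ t in Set.Ioi T, M * t ^ (-α)) :=
        (ofReal_integral_eq_lintegral_ofReal hint hnonneg).symm
    _ = ENNReal.ofReal (M * (T ^ (1 - α) / (α - 1))) := by
        rw [integral_const_mul, integral_Ioi_rpow_of_lt (by linarith) hT,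
          show -α + 1 = -(α - 1) by ring, div_neg, neg_div, neg_neg, neg_sub]

variable [OpensMeasurableSpace E]

lemma lintegral_inv_dist_le (hα : 1 < α) (hM : 0 ≤ M) {Φ : ℝ} (hΦ : 0 ≤ Φ)
    (hmass : σ Set.univ ≤ ENNReal.ofReal Φ)
    (hball : ∀ (x : E) (r : ℝ), 0 < r → σ (ball x r) ≤ ENNReal.ofReal (M * r ^ α))
    (x : E) {T : ℝ} (hT : 0 < T) :
    ∫⁻ y, ENNReal.ofReal (dist x y)⁻¹ ∂σ ≤
      ENNReal.ofReal (Φ * T + M * (T ^ (1 - α) / (α - 1))) := by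
  have hmeas : AEMeasurable (fun y => (dist x y)⁻¹) σ :=
    (continuous_const.dist continuous_id).measurable.inv.aemeasurable
  rw [lintegral_eq_lintegral_meas_lt σ (.of_forall fun y => inv_nonneg.2 dist_nonneg) hmeas,
    ← Set.Ioc_union_Ioi_eq_Ioi hT.le, lintegral_union measurableSet_Ioi Set.Ioc_disjoint_Ioi_same,
    ENNReal.ofReal_add (by positivity) (by have := hα; positivity)]
  gcongr
  · calc ∫⁻ t in Set.Ioc 0 T, σ {y | t < (dist x y)⁻¹}
        ≤ ∫⁻ _ in Set.Ioc 0 T, ENNReal.ofReal Φ :=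
          lintegral_mono fun t => (measure_mono (Set.subset_univ _)).trans hmass
      _ = ENNReal.ofReal (Φ * T) := by
          rw [setLIntegral_const, Real.volume_Ioc, sub_zero, ← ENNReal.ofReal_mul hΦ]
  · exact setLIntegral_Ioi_measure_lt_inv_dist_le hα hM hball x hT

lemma mul_rpow_add_rpow_div_eq (hα : 1 < α) (hM : 0 < M) {Φ : ℝ} (hΦ : 0 < Φ) :
    Φ * (M / Φ) ^ (1 / α) + M * (((M / Φ) ^ (1 / α)) ^ (1 - α) / (α - 1)) =
      α / (α - 1) * (M ^ (1 / α) * Φ ^ (1 - 1 / α)) := by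
  have hα0 : α ≠ 0 := by positivity
  have hα1 : α - 1 ≠ 0 := by linarith
  have hMΦ : 0 < M / Φ := div_pos hM hΦ
  have hfirst : Φ * (M / Φ) ^ (1 / α) = M ^ (1 / α) * Φ ^ (1 - 1 / α) := by
    rw [Real.div_rpow hM.le hΦ.le, Real.rpow_sub hΦ, Real.rpow_one]
    field_simp
  have hsecond : M * ((M / Φ) ^ (1 / α)) ^ (1 - α) = M ^ (1 / α) * Φ ^ (1 - 1 / α) := by
    rw [← Real.rpow_mul hMΦ.le, show 1 / α * (1 - α) = 1 / α - 1 by field_simp,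
      Real.rpow_sub hMΦ, Real.rpow_one, ← hfirst]
    field_simp
  rw [hfirst, ← mul_div_assoc, hsecond]
  field_simp
  ring

lemma lintegral_inv_dist_le_of_ahlfors (hα : 1 < α) (hM : 0 < M) {Φ : ℝ} (hΦ : 0 < Φ)
    (hmass : σ Set.univ ≤ ENNReal.ofReal Φ)
    (hball : ∀ (x : E) (r : ℝ), 0 < r → σ (ball x r) ≤ ENNReal.ofReal (M * r ^ α))
    (x : E) :
    ∫⁻ y, ENNReal.ofReal (dist x y)⁻¹ ∂σ ≤
      ENNReal.ofReal (α / (α - 1) * (M ^ (1 / α) * Φ ^ (1 - 1 / α))) := by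
  rw [← mul_rpow_add_rpow_div_eq hα hM hΦ]
  exact lintegral_inv_dist_le hα hM.le hΦ.le hmass hball x (by positivity)

lemma lintegral_lintegral_inv_dist_le_of_ahlfors (hα : 1 < α) (hM : 0 < M) {Φ : ℝ}
    (hΦ : 0 < Φ) (hmass : σ Set.univ ≤ ENNReal.ofReal Φ)
    (hball : ∀ (x : E) (r : ℝ), 0 < r → σ (ball x r) ≤ ENNReal.ofReal (M * r ^ α)) :
    ∫⁻ x, ∫⁻ y, ENNReal.ofReal (dist x y)⁻¹ ∂σ ∂σ ≤
      ENNReal.ofReal (α / (α - 1) * M ^ (1 / α) * Φ ^ (2 - 1 / α)) := by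
  have hα0 : 0 < α := by linarith
  calc ∫⁻ x, ∫⁻ y, ENNReal.ofReal (dist x y)⁻¹ ∂σ ∂σ
      ≤ ∫⁻ _, ENNReal.ofReal (α / (α - 1) * (M ^ (1 / α) * Φ ^ (1 - 1 / α))) ∂σ :=
        lintegral_mono (lintegral_inv_dist_le_of_ahlfors hα hM hΦ hmass hball)
    _ ≤ ENNReal.ofReal (α / (α - 1) * (M ^ (1 / α) * Φ ^ (1 - 1 / α))) * ENNReal.ofReal Φ := by
        rw [lintegral_const]
        gcongr
    _ = ENNReal.ofReal (α / (α - 1) * M ^ (1 / α) * Φ ^ (2 - 1 / α)) := by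
        have hα1 : 0 < α - 1 := by linarith
        rw [← ENNReal.ofReal_mul (by positivity), show (2 - 1 / α) = (1 - 1 / α) + 1 by ring,
          Real.rpow_add hΦ, Real.rpow_one]
        ring_nf

end AhlforsRegular

theorem stmt_9 (α : ℝ) (hα : α ∈ Set.Ioc (1 : ℝ) 2) :
    ∃ C > (0 : ℝ), ∀ (σ : Measure (EuclideanSpace ℝ (Fin 2))) (M Φ : ℝ),
      IsFiniteMeasure σ → 0 < M → 0 < Φ →
      σ Set.univ = ENNReal.ofReal Φ →
      (∀ (x : EuclideanSpace ℝ (Fin 2)) (r : ℝ), 0 < r →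
        σ (ball x r) ≤ ENNReal.ofReal (M * r ^ α)) →
      (∫⁻ x, ∫⁻ y, ENNReal.ofReal ‖x - y‖⁻¹ ∂σ ∂σ) ≤
        ENNReal.ofReal (C * M ^ (1 / α) * Φ ^ (2 - 1 / α)) := by
  have hα1 : 1 < α := hα.1
  refine ⟨α / (α - 1), div_pos (by linarith) (by linarith), ?_⟩
  intro σ M Φ _ hM hΦ hmass hball
  simp_rw [← dist_eq_norm]
  exact lintegral_lintegral_inv_dist_le_of_ahlfors hα1 hM hΦ hmass.le hball
end

section
/- Let σ be a finite positive measure on ℝ² with total mass Φ > 0, α ∈ (1, 2], M > 0, such that σ(B(x,r)) ≤ M·r^α for all x and r > 0. Let X = Φ^{-1}∫ x dσ(x) be its barycenter and r̄ = Φ^{-1}∫ |x − X| dσ(x) its spreading scale. Then M^(1/α)·r̄ ≥ c(α)·Φ^(1/α) for some constant c(α) > 0 depending only on α. -/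
open MeasureTheory Metric

/-!
If `σ (ball X r) ≤ M r ^ α` for all `r`, then the ball around `X` of radius
`r = (Φ / (2M)) ^ (1/α)` carries at most half of the mass `Φ`, so by Markov's inequality
`∫ ‖x - X‖ dσ ≥ r Φ / 2`, i.e. `M ^ (1/α) r̄ ≥ (Φ / 2) ^ (1/α) / 2`.
-/

section

variable {E : Type*} [PseudoMetricSpace E] [MeasurableSpace E] [OpensMeasurableSpace E]

theorem mul_sub_measureReal_ball_le_integral_dist (μ : Measure E) [IsFiniteMeasure μ]
    (X : E) (r : ℝ) (hint : Integrable (dist · X) μ) :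
    r * (μ.real Set.univ - μ.real (ball X r)) ≤ ∫ x, dist x X ∂μ := by
  have hcompl : {x | r ≤ dist x X} = (ball X r)ᶜ := by
    ext x
    simp
  rw [← measureReal_compl measurableSet_ball, ← hcompl]
  exact mul_meas_ge_le_integral_of_nonneg (.of_forall fun _ => dist_nonneg) hint r

theorem le_rpow_inv_mul_integral_dist_of_measure_ball_le (μ : Measure E)
    [IsFiniteMeasure μ] (X : E) {M α : ℝ} (hM : 0 < M) (hα : 0 < α)
    (hball : ∀ r, 0 < r → μ (ball X r) ≤ ENNReal.ofReal (M * r ^ α))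
    (hint : Integrable (dist · X) μ) :
    (μ.real Set.univ / 2) ^ α⁻¹ * (μ.real Set.univ / 2) ≤ M ^ α⁻¹ * ∫ x, dist x X ∂μ := by
  set Φ := μ.real Set.univ
  rcases (measureReal_nonneg : 0 ≤ Φ).eq_or_lt with hΦ | hΦ
  · rw [show Φ = 0 from hΦ.symm, zero_div, mul_zero]
    positivity
  set r := (Φ / (2 * M)) ^ α⁻¹
  have hr : 0 < r := by positivity
  have hMr : M * r ^ α = Φ / 2 := by
    rw [Real.rpow_inv_rpow (by positivity) hα.ne']
    field_simp
  have hMr' : M ^ α⁻¹ * r = (Φ / 2) ^ α⁻¹ := by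
    rw [← Real.mul_rpow hM.le (by positivity)]
    congr 1
    field_simp
  have hball_half : μ.real (ball X r) ≤ Φ / 2 :=
    ENNReal.toReal_le_of_le_ofReal (by positivity) (hMr ▸ hball r hr)
  have hmarkov : r * (Φ / 2) ≤ ∫ x, dist x X ∂μ :=
    calc r * (Φ / 2) ≤ r * (Φ - μ.real (ball X r)) := by gcongr; linarith
      _ ≤ _ := mul_sub_measureReal_ball_le_integral_dist μ X r hint
  calc (Φ / 2) ^ α⁻¹ * (Φ / 2) = M ^ α⁻¹ * (r * (Φ / 2)) := by rw [← hMr']; ring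
    _ ≤ M ^ α⁻¹ * ∫ x, dist x X ∂μ := by gcongr

end

theorem stmt_10 (α : ℝ) (hα : α ∈ Set.Ioc (1 : ℝ) 2) :
    ∃ c > (0 : ℝ), ∀ (σ : Measure (EuclideanSpace ℝ (Fin 2))) (M Φ : ℝ),
      IsFiniteMeasure σ → 0 < M → 0 < Φ →
      σ Set.univ = ENNReal.ofReal Φ →
      (∀ (x : EuclideanSpace ℝ (Fin 2)) (r : ℝ), 0 < r →
        σ (ball x r) ≤ ENNReal.ofReal (M * r ^ α)) →
      Integrable (fun x : EuclideanSpace ℝ (Fin 2) => x) σ →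
      ∀ X : EuclideanSpace ℝ (Fin 2), X = Φ⁻¹ • (∫ x, x ∂σ) →
      ∀ rbar : ℝ, rbar = Φ⁻¹ * (∫ x, ‖x - X‖ ∂σ) →
        M ^ (1 / α) * rbar ≥ c * Φ ^ (1 / α) := by
  have hα0 : 0 < α := by linarith [hα.1]
  refine ⟨(1 / 2) ^ (1 / α) / 2, by positivity, ?_⟩
  intro σ M Φ _ hM hΦ hmass hball hint X _ rbar hrbar
  have hΦreal : σ.real Set.univ = Φ := by simp [measureReal_def, hmass, hΦ.le]
  have hdist : Integrable (dist · X) σ := by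
    simpa only [dist_eq_norm, Pi.sub_apply] using (hint.sub (integrable_const X)).norm
  have key := le_rpow_inv_mul_integral_dist_of_measure_ball_le σ X hM hα0 (hball X) hdist
  simp only [hΦreal, dist_eq_norm, ← one_div] at key
  have hsplit : (Φ / 2) ^ (1 / α) = (1 / 2) ^ (1 / α) * Φ ^ (1 / α) := by
    rw [← Real.mul_rpow (by norm_num) hΦ.le]
    ring_nf
  rw [hrbar]
  calc (1 / 2) ^ (1 / α) / 2 * Φ ^ (1 / α) = Φ⁻¹ * ((Φ / 2) ^ (1 / α) * (Φ / 2)) := by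
        rw [hsplit]
        field_simp
    _ ≤ Φ⁻¹ * (M ^ (1 / α) * ∫ x, ‖x - X‖ ∂σ) := by gcongr
    _ = M ^ (1 / α) * (Φ⁻¹ * ∫ x, ‖x - X‖ ∂σ) := by ring
end
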